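/- Let d ≥ 1, let P_1, …, P_{d+1} ⊆ ℝ^d be pairwise disjoint finite sets with |P_i| ≤ d+1 and 0 ∈ conv(P_i) for every i = 1, …, d+1, and let ε be a real number with 0 < ε ≤ 1. Then there exists a set C ⊆ P_1 ∪ … ∪ P_{d+1} with 0 ∈ conv(C) and |C ∩ P_i| ≤ ⌈ε(d+1)⌉ for every i, i.e., an ⌈ε(d+1)⌉-colorful choice containing the origin in its convex hull. -/

import Mathlib

open scoped Classical

/-!
Bárány's colorful Carathéodory theorem gives a `1`-colorful choice, which suffices since
`⌈ε(d+1)⌉ ≥ 1`. Among all colorful choices take one whose hull `K` is closest to the origin, and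
suppose `0 ∉ K`. The nearest point `x` of `K` lies on the supporting hyperplane `⟪x, ·⟫ = ‖x‖²`,
so by Carathéodory in that hyperplane it is a convex combination of at most `d` chosen points.
Some color `i` is then not needed for `x`; since `0 ∈ conv(P i)`, some `p ∈ P i` has
`⟪x, p⟫ ≤ 0`, and replacing the point of color `i` by `p` brings the hull strictly closer to `0`.
-/

open Set Finset Function Module Metric
open scoped RealInnerProductSpace

theorem AffineIndependent.linearIndependent_of_forall_apply_eq {k V ι : Type*} [Field k]
    [AddCommGroup V] [Module k V] {p : ι → V} (hp : AffineIndependent k p) (φ : V →ₗ[k] k)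
    {c : k} (hc : c ≠ 0) (hφ : ∀ i, φ (p i) = c) : LinearIndependent k p := by
  rw [linearIndependent_iff']
  intro s g hg i hi
  have hsum : ∑ i ∈ s, g i = 0 := by
    have := congrArg φ hg
    simp only [map_sum, map_smul, hφ, smul_eq_mul, ← Finset.sum_mul, map_zero] at this
    exact (mul_eq_zero.1 this).resolve_right hc
  refine hp s g hsum ?_ i hi
  rw [s.weightedVSub_eq_weightedVSubOfPoint_of_sum_eq_zero g p hsum 0,
    Finset.weightedVSubOfPoint_apply]
  simpa using hg

theorem exists_finset_card_le_finrank_mem_convexHull_image {𝕜 E ι : Type*} [Field 𝕜]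
    [LinearOrder 𝕜] [IsStrictOrderedRing 𝕜] [AddCommGroup E] [Module 𝕜 E] [FiniteDimensional 𝕜 E]
    (φ : E →ₗ[𝕜] 𝕜) {f : ι → E} {x : E} (hx : x ∈ convexHull 𝕜 (range f)) (hφx : φ x ≠ 0)
    (hφ : ∀ i, φ x ≤ φ (f i)) :
    ∃ J : Finset ι, #J ≤ finrank 𝕜 E ∧ x ∈ convexHull 𝕜 (f '' J) := by
  obtain ⟨κ, _, z, w, hzf, hz, hw0, hw1, hwz⟩ := eq_pos_convex_span_of_mem_convexHull hx
  choose σ hσ using fun k ↦ hzf ⟨k, rfl⟩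
  have hφz : ∀ k, φ (z k) = φ x := by
    have hcomb : ∑ k, w k * φ (z k) = φ x := by
      simp only [← hwz, map_sum, map_smul, smul_eq_mul]
    have hsum : ∑ k, w k * (φ (z k) - φ x) = 0 := by
      simp only [mul_sub, Finset.sum_sub_distrib, hcomb, ← Finset.sum_mul, hw1, one_mul, sub_self]
    have hterm := (Finset.sum_eq_zero_iff_of_nonneg fun k _ ↦
      mul_nonneg (hw0 k).le (sub_nonneg.2 (hσ k ▸ hφ (σ k)))).1 hsum
    intro k
    exact sub_eq_zero.1 ((mul_eq_zero.1 (hterm k (mem_univ k))).resolve_left (hw0 k).ne')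
  have hcard : Fintype.card κ ≤ finrank 𝕜 E :=
    (hz.linearIndependent_of_forall_apply_eq φ hφx hφz).fintype_card_le_finrank
  refine ⟨univ.image σ, card_image_le.trans hcard, convexHull_mono (s := range z) ?_ ?_⟩
  · rintro _ ⟨k, rfl⟩
    exact ⟨σ k, by simp, hσ k⟩
  · rw [← hwz]
    exact (convex_convexHull 𝕜 _).sum_mem (fun k _ ↦ (hw0 k).le) hw1
      fun k _ ↦ subset_convexHull 𝕜 _ ⟨k, rfl⟩

variable {E : Type*} [NormedAddCommGroup E] [InnerProductSpace ℝ E]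

theorem Convex.norm_sq_le_inner_of_isMinOn {K : Set E} (hK : Convex ℝ K) {x w : E} (hx : x ∈ K)
    (hmin : IsMinOn norm K x) (hw : w ∈ K) : ‖x‖ ^ 2 ≤ ⟪x, w⟫ := by
  have : Nonempty K := ⟨⟨x, hx⟩⟩
  have hinf : ‖0 - x‖ = ⨅ v : K, ‖0 - (v : E)‖ := by
    simp only [zero_sub, norm_neg]
    exact le_antisymm (le_ciInf fun v ↦ hmin v.2)
      (ciInf_le (f := fun v : K ↦ ‖(v : E)‖)
        ⟨0, Set.forall_mem_range.2 fun _ ↦ norm_nonneg _⟩ ⟨x, hx⟩)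
  have h := (norm_eq_iInf_iff_real_inner_le_zero hK hx).1 hinf w hw
  rw [zero_sub, inner_neg_left, inner_sub_right, real_inner_self_eq_norm_sq] at h
  linarith

theorem exists_colorful_infDist_lt [FiniteDimensional ℝ E] {ι : Type*} [Fintype ι]
    (hι : finrank ℝ E < Fintype.card ι) {P : ι → Set E} (hP : ∀ i, 0 ∈ convexHull ℝ (P i))
    {f : ι → E} (hf : ∀ i, f i ∈ P i) (hf0 : 0 ∉ convexHull ℝ (range f)) :
    ∃ g : ι → E, (∀ i, g i ∈ P i) ∧
      infDist 0 (convexHull ℝ (range g)) < infDist 0 (convexHull ℝ (range f)) := by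
  set K := convexHull ℝ (range f)
  have : Nonempty ι := Fintype.card_pos_iff.1 (by omega)
  obtain ⟨x, hxK, hx⟩ := ((finite_range f).isCompact_convexHull ℝ).exists_infDist_eq_dist
    ((range_nonempty f).convexHull) 0
  rw [dist_zero_left] at hx
  have hxmin : IsMinOn norm K x := isMinOn_iff.2 fun z hz ↦ by
    simpa [← hx] using infDist_le_dist_of_mem (x := 0) hz
  have hx0 : x ≠ 0 := by
    rintro rfl
    exact hf0 hxK
  obtain ⟨J, hJ, hxJ⟩ := exists_finset_card_le_finrank_mem_convexHull_image (innerₛₗ ℝ x) hxK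
    (by simpa using hx0) fun i ↦ by
      simpa [real_inner_self_eq_norm_sq] using
        (convex_convexHull ℝ _).norm_sq_le_inner_of_isMinOn hxK hxmin
          (subset_convexHull ℝ _ (mem_range_self i))
  obtain ⟨i₀, -, hi₀⟩ := exists_mem_notMem_of_card_lt_card (s := J) (t := univ)
    (by simpa using hJ.trans_lt hι)
  obtain ⟨p, hp, hpx⟩ := ((innerₛₗ ℝ x).concaveOn convex_univ).exists_le_of_mem_convexHull
    (subset_univ _) (hP i₀)
  set g := update f i₀ p
  have hxg : x ∈ convexHull ℝ (range g) := by
    refine convexHull_mono ?_ hxJ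
    rintro _ ⟨j, hj, rfl⟩
    exact ⟨j, update_of_ne (ne_of_mem_of_not_mem hj hi₀) _ _⟩
  have hpg : p ∈ convexHull ℝ (range g) := subset_convexHull ℝ _ ⟨i₀, update_self _ _ _⟩
  obtain ⟨z, hz, hzx⟩ : ∃ z ∈ convexHull ℝ (range g), ‖z‖ < ‖x‖ := by
    by_contra! h
    have := (convex_convexHull ℝ _).norm_sq_le_inner_of_isMinOn hxg h hpg
    simp only [innerₛₗ_apply_apply, inner_zero_right] at hpx
    exact hx0 (by simpa using this.trans hpx)
  refine ⟨g, (forall_update_iff f fun i y ↦ y ∈ P i).2 ⟨hp, fun i _ ↦ hf i⟩, ?_⟩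
  calc infDist 0 (convexHull ℝ (range g)) ≤ ‖z‖ := by
        simpa using infDist_le_dist_of_mem (x := 0) hz
    _ < ‖x‖ := hzx
    _ = infDist 0 K := hx.symm

theorem colorful_caratheodory [FiniteDimensional ℝ E] {ι : Type*} [Fintype ι]
    (hι : finrank ℝ E < Fintype.card ι) (P : ι → Finset E)
    (hP : ∀ i, 0 ∈ convexHull ℝ (P i : Set E)) :
    ∃ f : ι → E, (∀ i, f i ∈ P i) ∧ 0 ∈ convexHull ℝ (range f) := by
  have hne : (Fintype.piFinset P).Nonempty := Fintype.piFinset_nonempty.2 fun i ↦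
    Finset.coe_nonempty.1 (convexHull_nonempty_iff.1 ⟨0, hP i⟩)
  obtain ⟨f, hf, hmin⟩ := (Fintype.piFinset P).exists_min_image
    (fun f ↦ infDist 0 (convexHull ℝ (range f))) hne
  rw [Fintype.mem_piFinset] at hf
  refine ⟨f, hf, by_contra fun hf0 ↦ ?_⟩
  obtain ⟨g, hg, hlt⟩ := exists_colorful_infDist_lt hι hP hf hf0
  exact (hmin g (Fintype.mem_piFinset.2 hg)).not_gt hlt

theorem eps_colorful_choice_general (d : ℕ)
    (P : Fin (d + 1) → Finset (EuclideanSpace ℝ (Fin d)))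
    (hdisj : ∀ i j, i ≠ j → Disjoint (P i) (P j))
    (h0 : ∀ i, (0 : EuclideanSpace ℝ (Fin d)) ∈
      convexHull ℝ ((P i : Set (EuclideanSpace ℝ (Fin d)))))
    (ε : ℝ) (hε₀ : 0 < ε) :
    ∃ C : Finset (EuclideanSpace ℝ (Fin d)),
      C ⊆ Finset.univ.biUnion P ∧
      (0 : EuclideanSpace ℝ (Fin d)) ∈
        convexHull ℝ ((C : Set (EuclideanSpace ℝ (Fin d)))) ∧
      ∀ i, (C ∩ P i).card ≤ ⌈ε * (d + 1 : ℝ)⌉₊ := by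
  obtain ⟨f, hfP, hf0⟩ := colorful_caratheodory (by simp) P h0
  have hcolor : ∀ i j, f j ∈ P i → j = i := fun i j h ↦
    by_contra fun hji ↦ Finset.disjoint_left.1 (hdisj j i hji) (hfP j) h
  refine ⟨Finset.univ.image f, fun y hy ↦ ?_, by simpa using hf0, fun i ↦ ?_⟩
  · obtain ⟨i, -, rfl⟩ := Finset.mem_image.1 hy
    exact Finset.mem_biUnion.2 ⟨i, mem_univ i, hfP i⟩
  · have hsub : Finset.univ.image f ∩ P i ⊆ {f i} := fun y hy ↦ by
      obtain ⟨⟨j, -, rfl⟩, hj⟩ := Finset.mem_inter.1 hy |>.imp_left Finset.mem_image.1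
      rw [hcolor i j hj]
      exact Finset.mem_singleton_self _
    calc _ ≤ #{f i} := Finset.card_le_card hsub
      _ = 1 := Finset.card_singleton _
      _ ≤ ⌈ε * (d + 1 : ℝ)⌉₊ := Nat.one_le_iff_ne_zero.2 (Nat.ceil_pos.2 (by positivity)).ne'

/-- Approximation of the colorful Carathéodory theorem: given `d + 1` pairwise
disjoint color classes in `ℝ^d`, each of size at most `d + 1` and each
containing the origin in its convex hull, and any `0 < ε ≤ 1`, there is an
`⌈ε(d+1)⌉`-colorful choice containing the origin in its convex hull. -/
theorem eps_colorful_choice (d : ℕ) (hd : 1 ≤ d)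
    (P : Fin (d + 1) → Finset (EuclideanSpace ℝ (Fin d)))
    (hdisj : ∀ i j, i ≠ j → Disjoint (P i) (P j))
    (hcard : ∀ i, (P i).card ≤ d + 1)
    (h0 : ∀ i, (0 : EuclideanSpace ℝ (Fin d)) ∈
      convexHull ℝ ((P i : Set (EuclideanSpace ℝ (Fin d)))))
    (ε : ℝ) (hε₀ : 0 < ε) (hε₁ : ε ≤ 1) :
    ∃ C : Finset (EuclideanSpace ℝ (Fin d)),
      C ⊆ Finset.univ.biUnion P ∧
      (0 : EuclideanSpace ℝ (Fin d)) ∈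
        convexHull ℝ ((C : Set (EuclideanSpace ℝ (Fin d)))) ∧
      ∀ i, (C ∩ P i).card ≤ ⌈ε * (d + 1 : ℝ)⌉₊ :=
  eps_colorful_choice_general d P hdisj h0 ε hε₀
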